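/- Suppose |𝒫| ≥ 4, every vertex of End(𝒫) is incident with at least one good edge, D(e) ≤ 2 holds for every good edge e, and some vertex x ∈ End(𝒫) is incident with exactly two bad edges. Then the total number of bad edges is at most 4. -/

import Mathlib

/-- The set of endpoints of a family of paths whose endpoints are given by `u i`, `v i`. -/
def endpointSet {V ι : Type*} (u v : ι → V) : Set V := Set.range u ∪ Set.range v

/-- `e` is an edge of `K_n` joining an endpoint of one path of the family to an endpoint
of a different path of the family. -/
def IsCrossEdge {V ι : Type*} (u v : ι → V) (e : Sym2 V) : Prop :=
  ∃ (i j : ι) (x y : V), i ≠ j ∧ (x = u i ∨ x = v i) ∧ (y = u j ∨ y = v j) ∧ e = s(x, y)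

/-- A cross edge is *bad* if it belongs to the graph `B`. -/
def IsBadEdge {V ι : Type*} (B : SimpleGraph V) (u v : ι → V) (e : Sym2 V) : Prop :=
  IsCrossEdge u v e ∧ e ∈ B.edgeSet

/-- A cross edge is *good* if it does not belong to the graph `B`. -/
def IsGoodEdge {V ι : Type*} (B : SimpleGraph V) (u v : ι → V) (e : Sym2 V) : Prop :=
  IsCrossEdge u v e ∧ e ∉ B.edgeSet

/-- `Dval B u v e` is the number of bad edges sharing a vertex with `e`. -/
noncomputable def Dval {V ι : Type*} (B : SimpleGraph V) (u v : ι → V) (e : Sym2 V) : ℕ :=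
  Set.ncard {f : Sym2 V | IsBadEdge B u v f ∧ ∃ z, z ∈ e ∧ z ∈ f}

/-!
Let `s(x, a)` and `s(x, b)` be the two bad edges at `x`, an end of the path `i`.
Every vertex `p` of a bad edge `f` lies in `W = {u i, v i, a, b}`: otherwise `s(x, p)` is a cross
edge, it cannot be bad (the only bad edges at `x` avoid `p`), and if it is good then it meets the
three distinct bad edges `s(x, a)`, `s(x, b)`, `f`. Every vertex of `W` is an endpoint, hence lies
on a good edge and so on at most two bad edges; double counting incidences between the bad edges
and `W` gives `2 · #bad ≤ 2 · 4`.
-/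

open Finset

theorem Sym2.two_mul_ncard_le_mul_card {V : Type*} {S : Set (Sym2 V)} {W : Finset V} {k : ℕ}
    (hdiag : ∀ e ∈ S, ¬e.IsDiag) (hSW : ∀ e ∈ S, ∀ z ∈ e, z ∈ W)
    (hdeg : ∀ z ∈ W, {e ∈ S | z ∈ e}.ncard ≤ k) :
    2 * S.ncard ≤ k * #W := by
  classical
  have hS : S.Finite := (W.sym2 : Set (Sym2 V)).toFinite.subset fun e he ↦
    Finset.mem_sym2_iff.mpr (hSW e he)
  lift S to Finset (Sym2 V) using hS
  rw [Set.ncard_coe_finset, mul_comm 2, mul_comm k]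
  refine card_mul_le_card_mul (fun (e : Sym2 V) (z : V) ↦ z ∈ e) (fun e he ↦ ?_) (fun z hz ↦ ?_)
  · obtain ⟨p, q⟩ := e
    have hpq : p ≠ q := hdiag _ he
    calc 2 = #{p, q} := (card_pair hpq).symm
      _ ≤ _ := card_le_card fun z hz ↦ by
        rw [mem_bipartiteAbove]
        rcases mem_insert.mp hz with rfl | hz
        · exact ⟨hSW _ he _ (Sym2.mem_mk_left _ _), Sym2.mem_mk_left _ _⟩
        rw [mem_singleton.mp hz]
        exact ⟨hSW _ he _ (Sym2.mem_mk_right _ _), Sym2.mem_mk_right _ _⟩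
  · simpa [bipartiteBelow, ← Set.ncard_coe_finset] using hdeg z hz

section BadEdges

variable {V ι : Type*} {B : SimpleGraph V} {u v : ι → V}

theorem mem_endpointSet_iff {z : V} : z ∈ endpointSet u v ↔ ∃ i, z = u i ∨ z = v i := by
  simp only [endpointSet, Set.mem_union, Set.mem_range, eq_comm (a := z)]
  grind

theorem IsCrossEdge.exists_of_mem {e : Sym2 V} (he : IsCrossEdge u v e) {z : V} (hz : z ∈ e) :
    ∃ i, z = u i ∨ z = v i := by
  obtain ⟨i, j, x, y, -, hx, hy, rfl⟩ := he
  rcases Sym2.mem_iff.mp hz with rfl | rfl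
  exacts [⟨i, hx⟩, ⟨j, hy⟩]

theorem IsCrossEdge.mem_endpointSet {e : Sym2 V} (he : IsCrossEdge u v e) {z : V} (hz : z ∈ e) :
    z ∈ endpointSet u v :=
  mem_endpointSet_iff.mpr (he.exists_of_mem hz)

theorem setOf_isCrossEdge_finite [Finite ι] : {e : Sym2 V | IsCrossEdge u v e}.Finite := by
  have hE : (endpointSet u v).Finite := (Set.finite_range u).union (Set.finite_range v)
  refine (hE.toFinset.sym2 : Set (Sym2 V)).toFinite.subset fun e he ↦ ?_
  exact Finset.mem_sym2_iff.mpr fun z hz ↦ hE.mem_toFinset.mpr (he.mem_endpointSet hz)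

theorem ncard_le_Dval [Finite ι] {e : Sym2 V} {S : Set (Sym2 V)}
    (hS : S ⊆ {f | IsBadEdge B u v f ∧ ∃ z, z ∈ e ∧ z ∈ f}) : S.ncard ≤ Dval B u v e :=
  Set.ncard_le_ncard hS (setOf_isCrossEdge_finite.subset fun _ hf ↦ hf.1.1)

theorem ncard_isBadEdge_mem_le_two [Finite ι]
    (hgood : ∀ x ∈ endpointSet u v, ∃ e, IsGoodEdge B u v e ∧ x ∈ e)
    (hD : ∀ e, IsGoodEdge B u v e → Dval B u v e ≤ 2) {z : V} (hz : z ∈ endpointSet u v) :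
    {e : Sym2 V | IsBadEdge B u v e ∧ z ∈ e}.ncard ≤ 2 := by
  obtain ⟨g, hg, hzg⟩ := hgood z hz
  exact (ncard_le_Dval fun f hf ↦ ⟨hf.1, z, hzg, hf.2⟩).trans (hD g hg)

theorem eq_or_mem_of_mem_isBadEdge [Finite ι] (hD : ∀ e, IsGoodEdge B u v e → Dval B u v e ≤ 2)
    {x : V} {i : ι} (hxi : x = u i ∨ x = v i) {e₁ e₂ : Sym2 V} (h₁₂ : e₁ ≠ e₂)
    (hx : {e : Sym2 V | IsBadEdge B u v e ∧ x ∈ e} = {e₁, e₂})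
    {f : Sym2 V} (hf : IsBadEdge B u v f) {p : V} (hp : p ∈ f) :
    p = u i ∨ p = v i ∨ p ∈ e₁ ∨ p ∈ e₂ := by
  by_contra! hpW
  obtain ⟨hpu, hpv, hp₁, hp₂⟩ := hpW
  obtain ⟨k, hpk⟩ := hf.1.exists_of_mem hp
  have hki : i ≠ k := by rintro rfl; tauto
  have hcross : IsCrossEdge u v s(x, p) := ⟨i, k, x, p, hki, hxi, hpk, rfl⟩
  have hbad₁ : IsBadEdge B u v e₁ ∧ x ∈ e₁ := hx.ge (Set.mem_insert _ _)
  have hbad₂ : IsBadEdge B u v e₂ ∧ x ∈ e₂ := hx.ge (Set.mem_insert_of_mem _ rfl)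
  by_cases hB : s(x, p) ∈ B.edgeSet
  · have : s(x, p) ∈ ({e₁, e₂} : Set (Sym2 V)) := hx ▸ ⟨⟨hcross, hB⟩, Sym2.mem_mk_left x p⟩
    rcases this with h | h
    exacts [hp₁ (h ▸ Sym2.mem_mk_right x p), hp₂ (h ▸ Sym2.mem_mk_right x p)]
  · have h3 : ({e₁, e₂, f} : Set (Sym2 V)).ncard = 3 :=
      Set.ncard_eq_three.mpr ⟨e₁, e₂, f, h₁₂, fun h ↦ hp₁ (h ▸ hp), fun h ↦ hp₂ (h ▸ hp), rfl⟩
    have hle : ({e₁, e₂, f} : Set (Sym2 V)).ncard ≤ Dval B u v s(x, p) := by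
      refine ncard_le_Dval ?_
      rintro g (rfl | rfl | rfl)
      · exact ⟨hbad₁.1, x, Sym2.mem_mk_left x p, hbad₁.2⟩
      · exact ⟨hbad₂.1, x, Sym2.mem_mk_left x p, hbad₂.2⟩
      · exact ⟨hf, p, Sym2.mem_mk_right x p, hp⟩
    have := hD _ ⟨hcross, hB⟩
    omega

end BadEdges

theorem bad_edges_le_four_general
    {V : Type*}
    (B : SimpleGraph V) (t : ℕ) (u v : Fin t → V)
    (hgood : ∀ x ∈ endpointSet u v, ∃ e, IsGoodEdge B u v e ∧ x ∈ e)
    (hD : ∀ e, IsGoodEdge B u v e → Dval B u v e ≤ 2)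
    (x : V) (hx : x ∈ endpointSet u v)
    (hx2 : Set.ncard {e : Sym2 V | IsBadEdge B u v e ∧ x ∈ e} = 2) :
    Set.ncard {e : Sym2 V | IsBadEdge B u v e} ≤ 4 := by
  classical
  obtain ⟨i, hxi⟩ := mem_endpointSet_iff.mp hx
  obtain ⟨e₁, e₂, h₁₂, hx₁₂⟩ := Set.ncard_eq_two.mp hx2
  obtain ⟨hbad₁, hx₁⟩ : IsBadEdge B u v e₁ ∧ x ∈ e₁ := hx₁₂.ge (Set.mem_insert _ _)
  obtain ⟨hbad₂, hx₂⟩ : IsBadEdge B u v e₂ ∧ x ∈ e₂ := hx₁₂.ge (Set.mem_insert_of_mem _ rfl)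
  obtain ⟨a, rfl⟩ := Sym2.mem_iff_exists.mp hx₁
  obtain ⟨b, rfl⟩ := Sym2.mem_iff_exists.mp hx₂
  have hW : ∀ e ∈ {e | IsBadEdge B u v e}, ∀ p ∈ e, p ∈ ({u i, v i, a, b} : Finset V) := by
    intro f hf p hp
    have := eq_or_mem_of_mem_isBadEdge hD hxi h₁₂ hx₁₂ hf hp
    simp only [Sym2.mem_iff, Finset.mem_insert, Finset.mem_singleton] at this ⊢
    grind
  have hdeg : ∀ z ∈ ({u i, v i, a, b} : Finset V),
      {e ∈ {e | IsBadEdge B u v e} | z ∈ e}.ncard ≤ 2 := by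
    intro z hz
    refine ncard_isBadEdge_mem_le_two hgood hD ?_
    simp only [Finset.mem_insert, Finset.mem_singleton] at hz
    rcases hz with rfl | rfl | rfl | rfl
    · exact mem_endpointSet_iff.mpr ⟨i, .inl rfl⟩
    · exact mem_endpointSet_iff.mpr ⟨i, .inr rfl⟩
    · exact hbad₁.1.mem_endpointSet (Sym2.mem_mk_right x z)
    · exact hbad₂.1.mem_endpointSet (Sym2.mem_mk_right x z)
  have := Sym2.two_mul_ncard_le_mul_card (fun e he ↦ B.not_isDiag_of_mem_edgeSet he.2) hW hdeg
  have := Finset.card_le_four (a := u i) (b := v i) (c := a) (d := b)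
  omega

/-- If the family `𝒫` consists of at least 4 pairwise vertex-disjoint paths of `K_n`,
each with at least one edge, every vertex of `End(𝒫)` is incident with at least one good
edge, `D(e) ≤ 2` for every good edge `e`, and some vertex `x ∈ End(𝒫)` is incident with
exactly two bad edges, then there are at most 4 bad edges in total. -/
theorem bad_edges_le_four
    {V : Type*} [Fintype V] [DecidableEq V]
    (B : SimpleGraph V) (t : ℕ) (ht : 4 ≤ t) (u v : Fin t → V)
    (P : ∀ i : Fin t, (⊤ : SimpleGraph V).Walk (u i) (v i))
    (hP : ∀ i, (P i).IsPath) (hne : ∀ i, u i ≠ v i)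
    (hdisj : ∀ i j, i ≠ j → List.Disjoint (P i).support (P j).support)
    (hgood : ∀ x ∈ endpointSet u v, ∃ e, IsGoodEdge B u v e ∧ x ∈ e)
    (hD : ∀ e, IsGoodEdge B u v e → Dval B u v e ≤ 2)
    (x : V) (hx : x ∈ endpointSet u v)
    (hx2 : Set.ncard {e : Sym2 V | IsBadEdge B u v e ∧ x ∈ e} = 2) :
    Set.ncard {e : Sym2 V | IsBadEdge B u v e} ≤ 4 :=
  bad_edges_le_four_general B t u v hgood hD x hx hx2
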